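/- Fix ε > 0 and γ > 0. (a) If C ≥ 0 is such that for every n ∈ ℕ and all independent random variables X_1,…,X_n with E X_k = 0, E X_k² < ∞ and B_n² = Σ_k E X_k² > 0 one has Δ_n ≤ C·sup_{0<z<ε} (max{z,1}/z)·( γ·|M_n(z)| + z·L_n(z) ), then C ≥ Φ(1) − 1/2 > 0.3413. (b) The same conclusion C ≥ Φ(1) − 1/2 holds if instead Δ_n ≤ C·( γ·(max{ε,1}/ε)·|M_n(ε)| + sup_{0<z<ε} max{z,1}·L_n(z) ) for all such n and X_1,…,X_n. -/

import Mathlib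

open MeasureTheory ProbabilityTheory Real Set
open scoped ENNReal

/-- The standard normal distribution function. -/
noncomputable def Phi (x : ℝ) : ℝ :=
  ∫ t in Set.Iic x, Real.exp (-t ^ 2 / 2) / Real.sqrt (2 * Real.pi)

/-- `B_n = sqrt (Σ E X_k²)`. -/
noncomputable def Bn {Ω : Type} [MeasurableSpace Ω] (μ : Measure Ω) {n : ℕ}
    (X : Fin n → Ω → ℝ) : ℝ :=
  Real.sqrt (∑ k, ∫ ω, (X k ω) ^ 2 ∂μ)

/-- Uniform distance between the d.f. of the normalized sum and the standard normal d.f. -/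
noncomputable def Deltan {Ω : Type} [MeasurableSpace Ω] (μ : Measure Ω) {n : ℕ}
    (X : Fin n → Ω → ℝ) : ℝ :=
  ⨆ x : ℝ, |(μ {ω | (∑ k, X k ω) / Bn μ X < x}).toReal - Phi x|

/-- `M_n(z) = B_n⁻³ Σ E[X_k³ 1_{|X_k| < z B_n}]`. -/
noncomputable def Mn {Ω : Type} [MeasurableSpace Ω] (μ : Measure Ω) {n : ℕ}
    (X : Fin n → Ω → ℝ) (z : ℝ) : ℝ :=
  (∑ k, ∫ ω, (if |X k ω| < z * Bn μ X then (X k ω) ^ 3 else 0) ∂μ) / (Bn μ X) ^ 3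

/-- `L_n(z) = B_n⁻² Σ E[X_k² 1_{|X_k| ≥ z B_n}]` (the Lindeberg fraction). -/
noncomputable def Lnn {Ω : Type} [MeasurableSpace Ω] (μ : Measure Ω) {n : ℕ}
    (X : Fin n → Ω → ℝ) (z : ℝ) : ℝ :=
  (∑ k, ∫ ω, (if z * Bn μ X ≤ |X k ω| then (X k ω) ^ 2 else 0) ∂μ) / (Bn μ X) ^ 2

/-- Hypotheses on the independent summands: measurability, independence, zero means,
finite second moments, positive total variance. -/
def GoodFamily {Ω : Type} [MeasurableSpace Ω] (μ : Measure Ω) {n : ℕ}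
    (X : Fin n → Ω → ℝ) : Prop :=
  (∀ k, Measurable (X k)) ∧
  iIndepFun X μ ∧
  (∀ k, Integrable (fun ω => (X k ω) ^ 2) μ) ∧
  (∀ k, ∫ ω, X k ω ∂μ = 0) ∧
  0 < ∑ k, ∫ ω, (X k ω) ^ 2 ∂μ

/-!
A single Rademacher summand `X = ±1` is an admissible family with `B_n = 1`. Its truncated third
moments vanish by symmetry and `L_n(z)` is `1` for `z ≤ 1` and `0` beyond, so both majorants are
at most `1`. On the other hand `P(X < 1) = 1/2`, so `Δ_n ≥ Φ(1) - 1/2`. The numerical value of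
`Φ(1) - 1/2 = (2π)^{-1/2} ∫₀¹ exp(-t²/2) dt` is bounded below by integrating a Taylor lower bound
of the integrand.
-/
lemma gaussianPDFReal_zero_one (t : ℝ) :
    gaussianPDFReal 0 1 t = Real.exp (-t ^ 2 / 2) / Real.sqrt (2 * Real.pi) := by
  simp [gaussianPDFReal, div_eq_inv_mul]

lemma Phi_eq_cdf_gaussianReal (x : ℝ) : Phi x = cdf (gaussianReal 0 1) x := by
  rw [cdf_eq_real, measureReal_def, gaussianReal_apply_eq_integral _ one_ne_zero,
    ENNReal.toReal_ofReal (setIntegral_nonneg measurableSet_Iic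
      fun t _ => gaussianPDFReal_nonneg 0 1 t), Phi]
  simp_rw [gaussianPDFReal_zero_one]

lemma Phi_nonneg (x : ℝ) : 0 ≤ Phi x := Phi_eq_cdf_gaussianReal x ▸ cdf_nonneg _ x

lemma Phi_le_one (x : ℝ) : Phi x ≤ 1 := Phi_eq_cdf_gaussianReal x ▸ cdf_le_one _ x

lemma integrable_exp_neg_sq_div_two : Integrable fun t : ℝ => Real.exp (-t ^ 2 / 2) := by
  simpa [neg_div, div_eq_inv_mul, mul_comm] using
    integrable_exp_neg_mul_sq (by norm_num : (0 : ℝ) < 1 / 2)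

lemma integral_Iic_zero_exp_neg_sq_div_two :
    ∫ t in Iic (0 : ℝ), Real.exp (-t ^ 2 / 2) = Real.sqrt (2 * Real.pi) / 2 := by
  rw [← neg_zero, ← integral_comp_neg_Ioi]
  convert integral_gaussian_Ioi (1 / 2) using 3 with t
  · ring_nf
  · ring_nf

lemma Phi_zero : Phi 0 = 1 / 2 := by
  rw [Phi, integral_div, integral_Iic_zero_exp_neg_sq_div_two]
  field_simp

lemma Phi_one_sub_half :
    Phi 1 - 1 / 2 = (∫ t in (0 : ℝ)..1, Real.exp (-t ^ 2 / 2)) / Real.sqrt (2 * Real.pi) := by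
  rw [← Phi_zero, Phi, Phi, integral_div, integral_div, ← sub_div,
    intervalIntegral.integral_Iic_sub_Iic integrable_exp_neg_sq_div_two.integrableOn
      integrable_exp_neg_sq_div_two.integrableOn]

/-- The Taylor polynomial of degree 10 of `exp (-t ^ 2 / 2)`, minus the remainder bound that
`Real.exp_bound` gives at order 6 for `|t ^ 2 / 2| ≤ 1`. -/
noncomputable def gaussLowerPoly (t : ℝ) : ℝ :=
  1 - t ^ 2 / 2 + t ^ 4 / 8 - t ^ 6 / 48 + t ^ 8 / 384 - t ^ 10 / 3840 - 7 * t ^ 12 / 276480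

lemma continuous_gaussLowerPoly : Continuous gaussLowerPoly := by
  unfold gaussLowerPoly; fun_prop

lemma gaussLowerPoly_le_exp {t : ℝ} (ht : t ^ 2 ≤ 2) :
    gaussLowerPoly t ≤ Real.exp (-t ^ 2 / 2) := by
  have hx : |-t ^ 2 / 2| ≤ 1 := by
    rw [abs_le]; constructor <;> nlinarith [sq_nonneg t]
  have h := (abs_le.mp (Real.exp_bound hx (n := 6) (by norm_num))).1
  have hpow : |-t ^ 2 / 2| ^ 6 = t ^ 12 / 64 := by
    rw [abs_div, abs_neg, abs_of_nonneg (sq_nonneg t)]; norm_num; ring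
  simp only [Finset.sum_range_succ, Finset.sum_range_zero, Nat.factorial, hpow] at h
  unfold gaussLowerPoly
  norm_num at h
  linarith

lemma integral_gaussLowerPoly :
    ∫ t in (0 : ℝ)..1, gaussLowerPoly t =
      1 - 1 / 6 + 1 / 40 - 1 / 336 + 1 / 3456 - 1 / 42240 - 7 / 3594240 := by
  have hderiv : ∀ t ∈ uIcc (0 : ℝ) 1, HasDerivAt
      (fun t : ℝ => t - t ^ 3 / 6 + t ^ 5 / 40 - t ^ 7 / 336 + t ^ 9 / 3456 - t ^ 11 / 42240
        - 7 * t ^ 13 / 3594240)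
      (gaussLowerPoly t) t := by
    intro t _
    refine ((((((hasDerivAt_id t).sub ((hasDerivAt_pow 3 t).div_const 6)).add
      ((hasDerivAt_pow 5 t).div_const 40)).sub ((hasDerivAt_pow 7 t).div_const 336)).add
      ((hasDerivAt_pow 9 t).div_const 3456)).sub ((hasDerivAt_pow 11 t).div_const 42240)).sub
      (((hasDerivAt_pow 13 t).const_mul 7).div_const 3594240) |>.congr_deriv ?_
    unfold gaussLowerPoly
    push_cast
    ring
  rw [intervalIntegral.integral_eq_sub_of_hasDerivAt hderiv
    (continuous_gaussLowerPoly.intervalIntegrable 0 1)]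
  norm_num

lemma sqrt_two_pi_lt : Real.sqrt (2 * Real.pi) < 2.50663 := by
  rw [Real.sqrt_lt' (by norm_num)]
  linarith [Real.pi_lt_d6]

lemma Phi_one_sub_half_gt : (0.3413 : ℝ) < Phi 1 - 1 / 2 := by
  have hint : 1 - 1 / 6 + 1 / 40 - 1 / 336 + 1 / 3456 - 1 / 42240 - 7 / 3594240
      ≤ ∫ t in (0 : ℝ)..1, Real.exp (-t ^ 2 / 2) := by
    rw [← integral_gaussLowerPoly]
    refine intervalIntegral.integral_mono_on zero_le_one ?_ ?_ fun t ht => ?_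
    · exact continuous_gaussLowerPoly.intervalIntegrable 0 1
    · exact (by fun_prop : Continuous fun t : ℝ => Real.exp (-t ^ 2 / 2)).intervalIntegrable 0 1
    · exact gaussLowerPoly_le_exp (by nlinarith [ht.1, ht.2])
  have hsqrt_pos : 0 < Real.sqrt (2 * Real.pi) := by positivity
  rw [Phi_one_sub_half, lt_div_iff₀ hsqrt_pos]
  nlinarith [sqrt_two_pi_lt]

lemma abs_measure_sub_Phi_le_Deltan {Ω : Type} [MeasurableSpace Ω] (μ : Measure Ω)
    [IsProbabilityMeasure μ] {n : ℕ} (X : Fin n → Ω → ℝ) (x : ℝ) :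
    |(μ {ω | (∑ k, X k ω) / Bn μ X < x}).toReal - Phi x| ≤ Deltan μ X := by
  refine le_ciSup (f := fun x => |(μ {ω | (∑ k, X k ω) / Bn μ X < x}).toReal - Phi x|)
    ⟨1, ?_⟩ x
  rintro _ ⟨y, rfl⟩
  have hprob : (μ {ω | (∑ k, X k ω) / Bn μ X < y}).toReal ≤ 1 := by
    simpa using ENNReal.toReal_mono (by simp) (prob_le_one (μ := μ))
  exact abs_sub_le_of_nonneg_of_le ENNReal.toReal_nonneg hprob (Phi_nonneg y) (Phi_le_one y)

noncomputable def rademacherMeasure : Measure Bool :=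
  (2⁻¹ : ℝ≥0∞) • (Measure.dirac true + Measure.dirac false)

instance : IsProbabilityMeasure rademacherMeasure := by
  constructor
  simp [rademacherMeasure, ← two_mul, ENNReal.mul_inv_cancel]

lemma integral_rademacherMeasure (f : Bool → ℝ) :
    ∫ b, f b ∂rademacherMeasure = (f true + f false) / 2 := by
  rw [integral_fintype .of_finite]
  simp [rademacherMeasure, measureReal_def]
  ring

def rademacher : Fin 1 → Bool → ℝ := fun _ b => if b then 1 else -1

lemma Bn_rademacher : Bn rademacherMeasure rademacher = 1 := by
  rw [Bn, Fin.sum_univ_one, integral_rademacherMeasure]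
  norm_num [rademacher]

lemma goodFamily_rademacher : GoodFamily rademacherMeasure rademacher := by
  refine ⟨fun _ => .of_discrete, .of_subsingleton, fun _ => .of_finite, fun _ => ?_, ?_⟩ <;>
    simp only [Fin.sum_univ_one, integral_rademacherMeasure] <;> norm_num [rademacher]

lemma Mn_rademacher (z : ℝ) : Mn rademacherMeasure rademacher z = 0 := by
  rw [Mn, Bn_rademacher, Fin.sum_univ_one, integral_rademacherMeasure]
  simp only [rademacher, if_true, Bool.false_eq_true, if_false, abs_one, abs_neg, mul_one]
  split_ifs <;> norm_num

lemma Lnn_rademacher (z : ℝ) : Lnn rademacherMeasure rademacher z = if z ≤ 1 then 1 else 0 := by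
  rw [Lnn, Bn_rademacher, Fin.sum_univ_one, integral_rademacherMeasure]
  norm_num [rademacher]

lemma Phi_one_sub_half_le_Deltan_rademacher :
    Phi 1 - 1 / 2 ≤ Deltan rademacherMeasure rademacher := by
  have hset : {b | (∑ k, rademacher k b) / Bn rademacherMeasure rademacher < 1} = {false} := by
    ext b; cases b <;> simp [rademacher, Bn_rademacher]
  have h := abs_measure_sub_Phi_le_Deltan rademacherMeasure rademacher 1
  rw [hset] at h
  have hhalf : (rademacherMeasure {false}).toReal = 1 / 2 := by
    simp [rademacherMeasure]
  rwa [hhalf, abs_sub_comm, abs_of_nonneg (by linarith [Phi_one_sub_half_gt])] at h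

lemma max_one_mul_Lnn_rademacher_le_one (z : ℝ) :
    max z 1 * Lnn rademacherMeasure rademacher z ≤ 1 := by
  rw [Lnn_rademacher]
  split_ifs with hz
  · simp [max_eq_right hz]
  · simp

lemma Phi_one_sub_half_le_of_Deltan_rademacher_le {C A : ℝ} (hC : 0 ≤ C) (hA : A ≤ 1)
    (h : Deltan rademacherMeasure rademacher ≤ C * A) : Phi 1 - 1 / 2 ≤ C :=
  calc Phi 1 - 1 / 2
      ≤ Deltan rademacherMeasure rademacher := Phi_one_sub_half_le_Deltan_rademacher
    _ ≤ C * A := h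
    _ ≤ C := mul_le_of_le_one_right hC hA

theorem lower_bound_optimistic_constants_general (ε γ : ℝ) (hε : 0 < ε) :
    (∀ C : ℝ, 0 ≤ C →
      (∀ (Ω : Type) (mΩ : MeasurableSpace Ω) (μ : Measure Ω), IsProbabilityMeasure μ →
        ∀ (n : ℕ) (X : Fin n → Ω → ℝ), GoodFamily μ X →
          Deltan μ X ≤
            C * sSup ((fun z => max z 1 / z * (γ * |Mn μ X z| + z * Lnn μ X z)) ''
              Set.Ioo (0 : ℝ) ε)) →
      Phi 1 - 1/2 ≤ C) ∧
    (∀ C : ℝ, 0 ≤ C →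
      (∀ (Ω : Type) (mΩ : MeasurableSpace Ω) (μ : Measure Ω), IsProbabilityMeasure μ →
        ∀ (n : ℕ) (X : Fin n → Ω → ℝ), GoodFamily μ X →
          Deltan μ X ≤
            C * (γ * (max ε 1 / ε) * |Mn μ X ε| +
              sSup ((fun z => max z 1 * Lnn μ X z) '' Set.Ioo (0 : ℝ) ε))) →
      Phi 1 - 1/2 ≤ C) ∧
    0.3413 < Phi 1 - 1/2 := by
  have hne : (Ioo 0 ε).Nonempty := nonempty_Ioo.mpr hε
  refine ⟨fun C hC hbound => ?_, fun C hC hbound => ?_, Phi_one_sub_half_gt⟩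
  · refine Phi_one_sub_half_le_of_Deltan_rademacher_le hC (csSup_le (hne.image _) ?_)
      (hbound Bool _ _ inferInstance 1 rademacher goodFamily_rademacher)
    rintro _ ⟨z, hz, rfl⟩
    calc max z 1 / z *
          (γ * |Mn rademacherMeasure rademacher z| + z * Lnn rademacherMeasure rademacher z)
        = max z 1 * Lnn rademacherMeasure rademacher z := by
          rw [Mn_rademacher, abs_zero, mul_zero, zero_add]
          field_simp [hz.1.ne']
      _ ≤ 1 := max_one_mul_Lnn_rademacher_le_one z
  · have h := hbound Bool _ _ inferInstance 1 rademacher goodFamily_rademacher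
    rw [Mn_rademacher, abs_zero, mul_zero, zero_add] at h
    refine Phi_one_sub_half_le_of_Deltan_rademacher_le hC (csSup_le (hne.image _) ?_) h
    rintro _ ⟨z, -, rfl⟩
    exact max_one_mul_Lnn_rademacher_le_one z

theorem lower_bound_optimistic_constants (ε γ : ℝ) (hε : 0 < ε) (hγ : 0 < γ) :
    (∀ C : ℝ, 0 ≤ C →
      (∀ (Ω : Type) (mΩ : MeasurableSpace Ω) (μ : Measure Ω), IsProbabilityMeasure μ →
        ∀ (n : ℕ) (X : Fin n → Ω → ℝ), GoodFamily μ X →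
          Deltan μ X ≤
            C * sSup ((fun z => max z 1 / z * (γ * |Mn μ X z| + z * Lnn μ X z)) ''
              Set.Ioo (0 : ℝ) ε)) →
      Phi 1 - 1/2 ≤ C) ∧
    (∀ C : ℝ, 0 ≤ C →
      (∀ (Ω : Type) (mΩ : MeasurableSpace Ω) (μ : Measure Ω), IsProbabilityMeasure μ →
        ∀ (n : ℕ) (X : Fin n → Ω → ℝ), GoodFamily μ X →
          Deltan μ X ≤
            C * (γ * (max ε 1 / ε) * |Mn μ X ε| +
              sSup ((fun z => max z 1 * Lnn μ X z) '' Set.Ioo (0 : ℝ) ε))) →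
      Phi 1 - 1/2 ≤ C) ∧
    0.3413 < Phi 1 - 1/2 :=
  lower_bound_optimistic_constants_general ε γ hε
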